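/- Let T be an odomutant built with uniformly c-multiple permutations τ^{(n)}_j fixing 0, with parameters c = (c_n, q̃_n)_{n≥0} and q_n = c_n q̃_n. Then for every ℓ ≥ 1, every n ≥ ℓ − 1, and every x_{n+1} ∈ {0,…,q_{n+1}−1}, the h_{n+1}-word of any point of the cylinder [0,…,0,x_{n+1}]_{n+2} with respect to the partition P̃(ℓ) is the concatenation W^{(n)}_0 · W^{(n)}_{(σ^{(n)}_{x_{n+1}})^{-1}(1)} · ⋯ · W^{(n)}_{(σ^{(n)}_{x_{n+1}})^{-1}(q_n−1)}, where W^{(n)}_i denotes the common h_n-word of all points of [0,…,0,i]_{n+1}. -/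

import Mathlib

/-! In the coordinates `ψ`, the odomutant `T` acts as the odometer `S` on the first `n + 1`
digits as long as the orbit stays away from the maximal point. Since every permutation fixes `0`,
a point of `[0,…,0,i]_{m+1}` has `ψ`-coordinates `0` below `m`, so for `j < h_m` the point
`T^j y` keeps the coordinates of `y` from `m` on and has as `ψ`-coordinates below `m` the
mixed-radix digits of `j` with radices `q_0, q_1, …`. As each `σ` is a bijection, the
coordinates up to `m` are recovered from the `ψ`-coordinates below `m` and the coordinate `m`;
this gives the well-definedness of the words. The time `a h_n + b` has the digits of `b`
below `n` and the digit `a` at `n`, so the coordinate `n` of `T^(a h_n + b) x` is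
`(σ_{x_{n+1}})⁻¹ a` and `T^(a h_n + b) x` agrees with `T^b y` up to the coordinate `n`. -/

noncomputable section

/-- The finite distortion `ψ_n`. -/
def psiN (q : ℕ → ℕ) (σ : ∀ n, Fin (q (n + 1)) → Equiv.Perm (Fin (q n))) (n : ℕ)
    (x : ∀ k, Fin (q k)) : ∀ k, Fin (q k) :=
  fun k => if k ≤ n then σ k (x (k + 1)) (x k) else x k

/-- The full distortion `ψ`. -/
def psiInf (q : ℕ → ℕ) (σ : ∀ n, Fin (q (n + 1)) → Equiv.Perm (Fin (q n)))
    (x : ∀ k, Fin (q k)) : ∀ k, Fin (q k) :=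
  fun k => σ k (x (k + 1)) (x k)

/-- The maximal point `x⁺`. -/
def xMax (q : ℕ → ℕ) (hq : ∀ n, 2 ≤ q n) : ∀ n, Fin (q n) :=
  fun n => ⟨q n - 1, by have := hq n; omega⟩

/-- The coding map of the partition `P̃(ℓ)`: the first `ℓ−1` coordinates,
together with the index `x_{ℓ-1} / c_{ℓ-1}` of the block `I_j^{(ℓ-1)}`
containing the last one. -/
def codeT (q : ℕ → ℕ) (c : ℕ → ℕ) (ℓ : ℕ) (x : ∀ n, Fin (q n)) : Fin ℓ → ℕ :=
  fun i => if (i : ℕ) + 1 < ℓ then (x (i : ℕ) : ℕ) else (x (i : ℕ) : ℕ) / c (ℓ - 1)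


def height (q : ℕ → ℕ) (n : ℕ) : ℕ := ∏ k ∈ Finset.range n, q k

def digit (q : ℕ → ℕ) (j k : ℕ) : ℕ := j / height q k % q k

section MixedRadix

variable {q : ℕ → ℕ} {i j k n : ℕ}

lemma height_zero : height q 0 = 1 := Finset.prod_range_zero q

lemma height_succ : height q (n + 1) = height q n * q n := Finset.prod_range_succ q n

lemma height_pos (hq : ∀ n, 0 < q n) : 0 < height q n :=
  Finset.prod_pos fun k _ => hq k

lemma height_dvd_height (hkn : k ≤ n) : height q k ∣ height q n :=
  Finset.prod_dvd_prod_of_subset _ _ q (Finset.range_mono hkn)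

lemma eq_height {h : ℕ → ℕ} (h0 : h 0 = 1) (hrec : ∀ n, h (n + 1) = q n * h n) :
    h = height q := by
  funext n
  induction n with
  | zero => rw [h0, height_zero]
  | succ n ih => rw [hrec, ih, height_succ, mul_comm]

lemma digit_lt (hq : ∀ n, 0 < q n) : digit q j k < q k := Nat.mod_lt _ (hq k)

lemma digit_eq_mod_height_succ_div : digit q j k = j % height q (k + 1) / height q k := by
  rw [height_succ, Nat.mod_mul_right_div_self, digit]

lemma digit_eq_zero_of_dvd (hq : ∀ n, 0 < q n) (hj : height q (k + 1) ∣ j) : digit q j k = 0 := by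
  obtain ⟨t, rfl⟩ := hj
  rw [digit, height_succ, mul_assoc, Nat.mul_div_cancel_left _ (height_pos hq), Nat.mul_mod_right]

lemma mod_height_eq_pred (hq : ∀ n, 0 < q n) (hmax : ∀ k < i, digit q j k = q k - 1) :
    j % height q i = height q i - 1 := by
  induction i with
  | zero => rw [height_zero, Nat.mod_one]
  | succ i ih =>
    have hqi := hq i
    have hhi := height_pos (q := q) hq (n := i)
    rw [height_succ, Nat.mod_mul, ih fun k hk => hmax k (by omega), ← digit, hmax i (by omega),
      Nat.mul_sub, mul_one]
    have : height q i ≤ height q i * q i := Nat.le_mul_of_pos_right _ hqi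
    omega

lemma exists_digit_ne_pred (hq : ∀ n, 0 < q n) (hj : j + 1 < height q n) :
    ∃ k < n, digit q j k ≠ q k - 1 := by
  by_contra! hmax
  have := mod_height_eq_pred hq hmax
  rw [Nat.mod_eq_of_lt (by omega)] at this
  omega

lemma height_dvd_succ_of_digit_eq_pred (hq : ∀ n, 0 < q n)
    (hmax : ∀ k < i, digit q j k = q k - 1) : height q i ∣ j + 1 := by
  have hmod := mod_height_eq_pred hq hmax
  have := Nat.div_add_mod j (height q i)
  have := height_pos (q := q) hq (n := i)
  exact ⟨j / height q i + 1, by rw [mul_add, mul_one]; omega⟩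

lemma digit_succ_of_lt (hq : ∀ n, 0 < q n) (hmax : ∀ k < i, digit q j k = q k - 1)
    (hk : k < i) : digit q (j + 1) k = 0 :=
  digit_eq_zero_of_dvd hq
    ((height_dvd_height hk).trans (height_dvd_succ_of_digit_eq_pred hq hmax))

lemma digit_succ_self (hq : ∀ n, 0 < q n) (hmax : ∀ k < i, digit q j k = q k - 1)
    (hi : digit q j i ≠ q i - 1) : digit q (j + 1) i = digit q j i + 1 := by
  have := digit_lt (j := j) (k := i) hq
  rw [digit, Nat.succ_div_of_dvd (height_dvd_succ_of_digit_eq_pred hq hmax), Nat.add_mod,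
    ← digit, Nat.mod_eq_of_lt (by omega : 1 < q i), Nat.mod_eq_of_lt (by omega)]

lemma digit_succ_of_gt (hq : ∀ n, 0 < q n) (hmax : ∀ k < i, digit q j k = q k - 1)
    (hi : digit q j i ≠ q i - 1) (hk : i < k) :
    digit q (j + 1) k = digit q j k := by
  have hndvd : ¬ height q k ∣ j + 1 := fun hdvd => by
    have := digit_eq_zero_of_dvd hq ((height_dvd_height hk).trans hdvd)
    rw [digit_succ_self hq hmax hi] at this
    omega
  rw [digit, Nat.succ_div_of_not_dvd hndvd, digit]

lemma digit_mul_height_add_of_lt (a b : ℕ) (hk : k < n) :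
    digit q (a * height q n + b) k = digit q b k := by
  obtain ⟨t, ht⟩ := height_dvd_height (q := q) (Nat.succ_le_of_lt hk)
  rw [digit_eq_mod_height_succ_div, digit_eq_mod_height_succ_div, ht, add_comm, mul_left_comm,
    Nat.add_mul_mod_self_left]

lemma digit_mul_height_add_self {a b : ℕ} (ha : a < q n) (hb : b < height q n) :
    digit q (a * height q n + b) n = a := by
  rw [digit, mul_comm, Nat.mul_add_div (by omega), Nat.div_eq_of_lt hb, add_zero,
    Nat.mod_eq_of_lt ha]

end MixedRadix

def IsOdometer (q : ℕ → ℕ) (S : (∀ n, Fin (q n)) → ∀ n, Fin (q n)) : Prop :=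
  ∀ (x : ∀ n, Fin (q n)) (i : ℕ), (∀ j, j < i → (x j : ℕ) = q j - 1) → (x i : ℕ) ≠ q i - 1 →
    (∀ j, j < i → (S x j : ℕ) = 0) ∧ (S x i : ℕ) = (x i : ℕ) + 1 ∧ ∀ j, i < j → S x j = x j

def IsOdomutant (q : ℕ → ℕ) (hq : ∀ n, 2 ≤ q n)
    (σ : ∀ n, Fin (q (n + 1)) → Equiv.Perm (Fin (q n)))
    (S T : (∀ n, Fin (q n)) → ∀ n, Fin (q n)) : Prop :=
  ∀ x n, (∃ k ≤ n, psiInf q σ x k ≠ xMax q hq k) → psiN q σ n (T x) = S (psiN q σ n x)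

section Odomutant

variable {q : ℕ → ℕ} {σ : ∀ n, Fin (q (n + 1)) → Equiv.Perm (Fin (q n))}

lemma psiN_of_le {n k : ℕ} (x : ∀ k, Fin (q k)) (hk : k ≤ n) :
    psiN q σ n x k = psiInf q σ x k := by
  simp [psiN, psiInf, hk]

lemma psiN_of_lt {n k : ℕ} (x : ∀ k, Fin (q k)) (hk : n < k) : psiN q σ n x k = x k := by
  simp [psiN, Nat.not_le.mpr hk]

lemma eq_of_psiInf_eq {n : ℕ} {x y : ∀ k, Fin (q k)}
    (hψ : ∀ k < n, psiInf q σ x k = psiInf q σ y k) (hn : x n = y n) {k : ℕ} (hk : k ≤ n) :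
    x k = y k := by
  refine Nat.decreasingInduction (motive := fun k _ => x k = y k) (fun k hk ih => ?_) hn hk
  exact (σ k (y (k + 1))).injective (by simpa [psiInf, ih] using hψ k hk)

variable {hq : ∀ n, 2 ≤ q n} {S T : (∀ n, Fin (q n)) → ∀ n, Fin (q n)}

lemma IsOdomutant.apply_of_psiInf_eq_digit (hS : IsOdometer q S)
    (hT : IsOdomutant q hq σ S T) {N j : ℕ} {z : ∀ k, Fin (q k)}
    (hz : ∀ k ≤ N, (psiInf q σ z k : ℕ) = digit q j k)
    (hj : j + 1 < height q (N + 1)) :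
    (∀ r, N < r → T z r = z r) ∧ ∀ k ≤ N, (psiInf q σ (T z) k : ℕ) = digit q (j + 1) k := by
  classical
  have hq₀ : ∀ n, 0 < q n := fun n => by have := hq n; omega
  -- the carry position: the first digit of `j` that is not maximal
  have hex := exists_digit_ne_pred hq₀ hj
  obtain ⟨hiN, hi⟩ := Nat.find_spec hex
  set i := Nat.find hex
  have hmax : ∀ k < i, digit q j k = q k - 1 := fun k hk =>
    not_not.mp (not_and.mp (Nat.find_min hex hk) (by omega))
  have hzi : (psiN q σ N z i : ℕ) ≠ q i - 1 := by rwa [psiN_of_le z (by omega), hz i (by omega)]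
  have hzmax : ∀ k < i, (psiN q σ N z k : ℕ) = q k - 1 := fun k hk => by
    rw [psiN_of_le z (by omega), hz k (by omega), hmax k hk]
  have hz_ne_max : psiInf q σ z i ≠ xMax q hq i := fun h =>
    hzi (by simpa [psiN_of_le z (show i ≤ N by omega), xMax] using congrArg Fin.val h)
  have hTz : psiN q σ N (T z) = S (psiN q σ N z) := hT z N ⟨i, by omega, hz_ne_max⟩
  obtain ⟨hS_lt, hS_self, hS_gt⟩ := hS _ i hzmax hzi
  refine ⟨fun r hr => ?_, fun k hk => ?_⟩
  · rw [← psiN_of_lt (σ := σ) (T z) hr, hTz, hS_gt r (by omega), psiN_of_lt z hr]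
  · rw [← psiN_of_le (T z) hk, hTz]
    rcases lt_trichotomy k i with hki | rfl | hik
    · rw [hS_lt k hki, digit_succ_of_lt hq₀ hmax hki]
    · rw [hS_self, digit_succ_self hq₀ hmax hi, psiN_of_le z hk, hz i hk]
    · rw [hS_gt k hik, digit_succ_of_gt hq₀ hmax hi hik, psiN_of_le z hk, hz k hk]

lemma IsOdomutant.iterate_of_psiInf_eq_zero (hS : IsOdometer q S)
    (hT : IsOdomutant q hq σ S T) {n : ℕ} {x : ∀ k, Fin (q k)}
    (hx : ∀ k < n, (psiInf q σ x k : ℕ) = 0) {j : ℕ} (hj : j < height q n) :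
    (∀ r, n ≤ r → T^[j] x r = x r) ∧ ∀ k < n, (psiInf q σ (T^[j] x) k : ℕ) = digit q j k := by
  induction j with
  | zero => exact ⟨fun _ _ => rfl, fun k hk => by simpa [digit] using hx k hk⟩
  | succ j ih =>
    obtain ⟨hfix, hdig⟩ := ih (by omega)
    obtain ⟨N, rfl⟩ : ∃ N, n = N + 1 :=
      Nat.exists_eq_succ_of_ne_zero (by rintro rfl; simp [height_zero] at hj)
    obtain ⟨hfix', hdig'⟩ := hT.apply_of_psiInf_eq_digit hS (fun k hk => hdig k (by omega)) hj
    rw [Function.iterate_succ_apply']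
    exact ⟨fun r hr => (hfix' r hr).trans (hfix r hr), fun k hk => hdig' k (by omega)⟩

lemma IsOdomutant.iterate_apply_eq (hS : IsOdometer q S) (hT : IsOdomutant q hq σ S T) {m : ℕ}
    {y y' : ∀ k, Fin (q k)} (hy : ∀ k < m, (psiInf q σ y k : ℕ) = 0)
    (hy' : ∀ k < m, (psiInf q σ y' k : ℕ) = 0) (hm : y m = y' m) {j : ℕ} (hj : j < height q m)
    {k : ℕ} (hk : k ≤ m) : T^[j] y k = T^[j] y' k := by
  obtain ⟨hfix, hdig⟩ := hT.iterate_of_psiInf_eq_zero hS hy hj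
  obtain ⟨hfix', hdig'⟩ := hT.iterate_of_psiInf_eq_zero hS hy' hj
  exact eq_of_psiInf_eq (fun k hk => Fin.ext ((hdig k hk).trans (hdig' k hk).symm))
    (by rw [hfix m le_rfl, hfix' m le_rfl, hm]) hk

lemma IsOdomutant.iterate_mul_height_add_apply (hS : IsOdometer q S)
    (hT : IsOdomutant q hq σ S T) {n : ℕ} {x y : ∀ k, Fin (q k)}
    (hx : ∀ k < n + 1, (psiInf q σ x k : ℕ) = 0) (hy : ∀ k < n, (psiInf q σ y k : ℕ) = 0)
    {a : Fin (q n)} {b : ℕ} (hb : b < height q n) (hyn : y n = (σ n (x (n + 1)))⁻¹ a)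
    {k : ℕ} (hk : k ≤ n) : T^[a * height q n + b] x k = T^[b] y k := by
  have hj : a * height q n + b < height q (n + 1) := by
    rw [height_succ]; nlinarith [a.2]
  obtain ⟨hfix, hdig⟩ := hT.iterate_of_psiInf_eq_zero hS hx hj
  obtain ⟨hfixy, hdigy⟩ := hT.iterate_of_psiInf_eq_zero hS hy hb
  refine eq_of_psiInf_eq (σ := σ) (fun k hk => Fin.ext ?_) ?_ hk
  · rw [hdig k (by omega), hdigy k hk, digit_mul_height_add_of_lt _ _ hk]
  · rw [hfixy n le_rfl, hyn, Equiv.Perm.eq_inv_iff_eq, ← hfix (n + 1) le_rfl]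
    exact Fin.ext ((hdig n n.lt_succ_self).trans (digit_mul_height_add_self a.2 hb))

end Odomutant

lemma codeT_congr {q c : ℕ → ℕ} {ℓ : ℕ} {x y : ∀ k, Fin (q k)} (h : ∀ k < ℓ, x k = y k) :
    codeT q c ℓ x = codeT q c ℓ y :=
  funext fun r => by simp only [codeT, h r r.2]

theorem stmt18_general (q c : ℕ → ℕ)
    (hq : ∀ n, 2 ≤ q n)
    (σ : ∀ n, Fin (q (n + 1)) → Equiv.Perm (Fin (q n)))
    -- all the permutations fix 0
    (hσ0 : ∀ n (i : Fin (q (n + 1))) (a : Fin (q n)), (a : ℕ) = 0 → (σ n i a : ℕ) = 0)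
    (S : Equiv.Perm (∀ n, Fin (q n)))
    (hS : ∀ (x : ∀ n, Fin (q n)) (i : ℕ),
      (∀ j, j < i → (x j : ℕ) = q j - 1) → (x i : ℕ) ≠ q i - 1 →
        (∀ j, j < i → (S x j : ℕ) = 0) ∧ (S x i : ℕ) = (x i : ℕ) + 1 ∧
          ∀ j, i < j → S x j = x j)
    (T : Equiv.Perm (∀ n, Fin (q n)))
    -- T is the odomutant associated to S and the permutations σ
    (hT : ∀ x, ∀ n, (∃ k ≤ n, psiInf q σ x k ≠ xMax q hq k) →
      psiN q σ n (T x) = S (psiN q σ n x))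
    (h : ℕ → ℕ) (h0 : h 0 = 1) (hrec : ∀ n, h (n + 1) = q n * h n)
    (ℓ : ℕ) (n : ℕ) (hn : ℓ - 1 ≤ n) :
    -- well-definedness of the tower words W^{(m)}_i for m ≥ ℓ−1
    (∀ m : ℕ, ℓ - 1 ≤ m → ∀ (i : Fin (q m)) (y y' : ∀ r, Fin (q r)),
      (∀ r, r < m → (y r : ℕ) = 0) → y m = i →
      (∀ r, r < m → (y' r : ℕ) = 0) → y' m = i →
        ∀ j, j < h m → codeT q c ℓ ((⇑T)^[j] y) = codeT q c ℓ ((⇑T)^[j] y')) ∧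
    -- concatenation: the h_{n+1}-word of x ∈ [0,…,0,x_{n+1}]_{n+2}
    (∀ (xnext : Fin (q (n + 1))) (x : ∀ r, Fin (q r)),
      (∀ r, r < n + 1 → (x r : ℕ) = 0) → x (n + 1) = xnext →
        ∀ (a : Fin (q n)) (b : ℕ), b < h n →
          ∀ y : ∀ r, Fin (q r), (∀ r, r < n → (y r : ℕ) = 0) → y n = (σ n xnext)⁻¹ a →
            codeT q c ℓ ((⇑T)^[(a : ℕ) * h n + b] x) = codeT q c ℓ ((⇑T)^[b] y)) := by
  obtain rfl := eq_height h0 hrec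
  have psiInf_eq_zero : ∀ {m : ℕ} {x : ∀ r, Fin (q r)}, (∀ r < m, (x r : ℕ) = 0) →
      ∀ k < m, (psiInf q σ x k : ℕ) = 0 := fun hx k hk => hσ0 k _ _ (hx k hk)
  refine ⟨fun m hm i y y' hy hyi hy' hy'i j hj => codeT_congr fun k hk => ?_,
    fun xnext x hx hxn a b hb y hy hyn => codeT_congr fun k hk => ?_⟩
  · exact IsOdomutant.iterate_apply_eq hS hT (psiInf_eq_zero hy) (psiInf_eq_zero hy')
      (hyi.trans hy'i.symm) hj (by omega)
  · subst hxn
    exact IsOdomutant.iterate_mul_height_add_apply hS hT (psiInf_eq_zero hx) (psiInf_eq_zero hy)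
      hb hyn (by omega)

/-- For an odomutant built with uniformly `c`-multiple permutations fixing `0`:
the `h_n`-word (w.r.t. `P̃(ℓ)`) of a point of `[0,…,0,m]_{n+1}` only depends on `m`,
and the `h_{n+1}`-word of a point of `[0,…,0,x_{n+1}]_{n+2}` is the concatenation
`W^{(n)}_{(σ^{(n)}_{x_{n+1}})^{-1}(0)} ⋯ W^{(n)}_{(σ^{(n)}_{x_{n+1}})^{-1}(q_n−1)}`. -/
theorem stmt18 (q qt c : ℕ → ℕ) (hc : ∀ n, 0 < c n) (hqc : ∀ n, q n = c n * qt n)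
    (hq : ∀ n, 2 ≤ q n)
    (τ : ∀ n, Fin (qt (n + 1)) → Equiv.Perm (Fin (q n)))
    (σ : ∀ n, Fin (q (n + 1)) → Equiv.Perm (Fin (q n)))
    -- σ are the c-multiple permutations built from τ
    (hστ : ∀ n (i : Fin (q (n + 1))) (j : Fin (qt (n + 1))),
      (i : ℕ) / c (n + 1) = (j : ℕ) → σ n i = τ n j)
    -- all the permutations fix 0
    (hσ0 : ∀ n (i : Fin (q (n + 1))) (a : Fin (q n)), (a : ℕ) = 0 → (σ n i a : ℕ) = 0)
    (S : Equiv.Perm (∀ n, Fin (q n)))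
    (hS : ∀ (x : ∀ n, Fin (q n)) (i : ℕ),
      (∀ j, j < i → (x j : ℕ) = q j - 1) → (x i : ℕ) ≠ q i - 1 →
        (∀ j, j < i → (S x j : ℕ) = 0) ∧ (S x i : ℕ) = (x i : ℕ) + 1 ∧
          ∀ j, i < j → S x j = x j)
    (hS' : ∀ (x : ∀ n, Fin (q n)), (∀ j, (x j : ℕ) = q j - 1) → ∀ j, (S x j : ℕ) = 0)
    (T : Equiv.Perm (∀ n, Fin (q n)))
    -- T is the odomutant associated to S and the permutations σ
    (hT : ∀ x, ∀ n, (∃ k ≤ n, psiInf q σ x k ≠ xMax q hq k) →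
      psiN q σ n (T x) = S (psiN q σ n x))
    (h : ℕ → ℕ) (h0 : h 0 = 1) (hrec : ∀ n, h (n + 1) = q n * h n)
    (ℓ : ℕ) (hℓ : 1 ≤ ℓ) (n : ℕ) (hn : ℓ - 1 ≤ n) :
    -- well-definedness of the tower words W^{(m)}_i for m ≥ ℓ−1
    (∀ m : ℕ, ℓ - 1 ≤ m → ∀ (i : Fin (q m)) (y y' : ∀ r, Fin (q r)),
      (∀ r, r < m → (y r : ℕ) = 0) → y m = i →
      (∀ r, r < m → (y' r : ℕ) = 0) → y' m = i →
        ∀ j, j < h m → codeT q c ℓ ((⇑T)^[j] y) = codeT q c ℓ ((⇑T)^[j] y')) ∧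
    -- concatenation: the h_{n+1}-word of x ∈ [0,…,0,x_{n+1}]_{n+2}
    (∀ (xnext : Fin (q (n + 1))) (x : ∀ r, Fin (q r)),
      (∀ r, r < n + 1 → (x r : ℕ) = 0) → x (n + 1) = xnext →
        ∀ (a : Fin (q n)) (b : ℕ), b < h n →
          ∀ y : ∀ r, Fin (q r), (∀ r, r < n → (y r : ℕ) = 0) → y n = (σ n xnext)⁻¹ a →
            codeT q c ℓ ((⇑T)^[(a : ℕ) * h n + b] x) = codeT q c ℓ ((⇑T)^[b] y)) :=
  stmt18_general q c hq σ hσ0 S hS T hT h h0 hrec ℓ n hn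

end
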